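/- arXiv:1412.8277 — 7 statements merged into one kernel-verified Lean document; each statement's English description precedes it below -/
import Mathlib

section
/- Let p be a prime and K a field such that x^p = ζ_p^q has no solution in K for any integer q not divisible by p, where ζ_p ∈ K is a primitive p-th root of unity. If V is a finite-dimensional K-vector space with a linear operator B satisfying B^p = ζ_p · id, then p divides dim V. -/
/-- If `K` is a field of characteristic `≠ p` containing a primitive
`p`-th root of unity `ζ` such that `x ^ p = ζ ^ q` has no solution in `K` whenever
`p ∤ q`, and `B` is a linear operator on a finite-dimensional `K`-vector space `V`
with `B ^ p = ζ • id`, then `p` divides `dim V`. -/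
theorem dim_divisible_of_pow_eq_zeta_smul_id
    (p : ℕ) (hp : p.Prime) (K : Type*) [Field K] (hchar : ringChar K ≠ p)
    (ζ : K) (hζ : IsPrimitiveRoot ζ p)
    (hK : ∀ q : ℤ, ¬ (p : ℤ) ∣ q → ¬ ∃ x : K, x ^ p = ζ ^ q)
    (V : Type*) [AddCommGroup V] [Module K V] [FiniteDimensional K V]
    (B : Module.End K V) (hB : B ^ p = ζ • (1 : Module.End K V)) :
    p ∣ Module.finrank K V := by
  by_contra h
  apply hK (Module.finrank K V) (by exact_mod_cast h)
  refine ⟨LinearMap.det B, ?_⟩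
  have h1 : LinearMap.det (B ^ p) = LinearMap.det (ζ • (1 : Module.End K V)) :=
    congrArg _ hB
  rw [map_pow, LinearMap.det_smul] at h1
  simpa [zpow_natCast] using h1
end

section
/- Let p be a prime, K a field satisfying: char(K) ≠ p, K contains a primitive p-th root of unity ζ_p, and x^p = ζ_p^q has no solution in K for p ∤ q. Let φ be a permutation of a finite set Y such that φ^p = id and φ has no fixed points (so all orbits have size exactly p). Let V be the free K-vector space on Y with induced operator A. If there exists a linear map B : V → V with B^p = A, then p divides the number of orbits of φ on Y. -/
/-!
`B` commutes with `A = B ^ p`, so it preserves the eigenspace `E` of `A` for the eigenvalue `ζ`,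
and there `B ^ p` acts as the scalar `ζ`. Taking determinants, `ζ ^ dim E` is a `p`-th power in
`K`, so the hypothesis on `K` forces `p ∣ dim E`. Finally `dim E` is the number of orbits: on
each orbit `{y, φ y, …}` of length `p` an eigenvector is determined by its value `c` at one
point, being `c, ζ⁻¹ c, ζ⁻² c, …` along the orbit, which closes up because `ζ ^ p = 1`.
-/

open MulAction Subgroup Module

theorem MulAction.period_eq_prime {M α : Type*} [Monoid M] [MulAction M α] {p : ℕ}
    (hp : p.Prime) {g : M} (hg : g ^ p = 1) {a : α} (ha : g • a ≠ a) : period g a = p :=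
  (Nat.dvd_prime hp).mp (pow_smul_eq_iff_period_dvd.mp (by rw [hg, one_smul])) |>.resolve_left
    (period_eq_one_iff.not.mpr ha)

theorem zpow_eq_zpow_of_dvd_sub {G₀ : Type*} [GroupWithZero G₀] {x : G₀} (hx : x ≠ 0) {n : ℕ}
    (hxn : x ^ n = 1) {a b : ℤ} (hab : (n : ℤ) ∣ a - b) : x ^ a = x ^ b := by
  obtain ⟨k, hk⟩ := hab
  rw [← sub_add_cancel a b, zpow_add₀ hx, hk, zpow_mul, zpow_natCast, hxn, one_zpow, one_mul]

namespace Equiv.Perm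

variable {Y : Type*} {φ : Perm Y}

theorem period_dvd_sub_of_zpow_apply_eq {y : Y} {a b : ℤ} (h : (φ ^ a) y = (φ ^ b) y) :
    (period φ y : ℤ) ∣ a - b := by
  rw [← zpow_smul_eq_iff_period_dvd, sub_eq_neg_add, zpow_add, zpow_neg, Perm.smul_def,
    Perm.mul_apply, h, Perm.inv_def, Equiv.symm_apply_apply]

theorem apply_eq_of_orbitRel {β : Type*} {g : Y → β} (hg : ∀ y, g (φ y) = g y) {x y : Y}
    (hxy : orbitRel (zpowers φ) Y x y) : g x = g y := by
  have hzpow (n : ℤ) : g ((φ ^ n) y) = g y := by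
    induction n using Int.induction_on with
    | zero => rfl
    | succ n ih => rw [add_comm, zpow_one_add, Perm.mul_apply, hg, ih]
    | pred n ih => rw [← ih, ← hg, ← Perm.mul_apply, ← zpow_one_add, add_sub_cancel]
  obtain ⟨⟨_, n, rfl⟩, rfl⟩ := orbitRel_apply.mp hxy
  exact hzpow n

noncomputable def orbitRep (φ : Perm Y) (y : Y) : Y :=
  (Quotient.mk (orbitRel (zpowers φ) Y) y).out

theorem orbitRel_orbitRep (φ : Perm Y) (y : Y) : orbitRel (zpowers φ) Y (orbitRep φ y) y :=
  Quotient.mk_out (s := orbitRel (zpowers φ) Y) y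

theorem orbitRel_apply_self (φ : Perm Y) (y : Y) : orbitRel (zpowers φ) Y (φ y) y :=
  ⟨⟨φ, mem_zpowers φ⟩, rfl⟩

theorem orbitRep_eq_of_orbitRel {x y : Y} (h : orbitRel (zpowers φ) Y x y) :
    orbitRep φ x = orbitRep φ y :=
  congrArg Quotient.out (Quotient.sound h)

theorem orbitRep_apply_self (φ : Perm Y) (y : Y) : orbitRep φ (φ y) = orbitRep φ y :=
  orbitRep_eq_of_orbitRel (orbitRel_apply_self φ y)

theorem exists_zpow_orbitRep_eq (φ : Perm Y) (y : Y) : ∃ n : ℤ, (φ ^ n) (orbitRep φ y) = y := by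
  obtain ⟨⟨_, n, rfl⟩, h⟩ :=
    orbitRel_apply.mp ((orbitRel (zpowers φ) Y).iseqv.symm (orbitRel_orbitRep φ y))
  exact ⟨n, h⟩

noncomputable def orbitExponent (φ : Perm Y) (y : Y) : ℤ :=
  (exists_zpow_orbitRep_eq φ y).choose

theorem zpow_orbitExponent_apply (φ : Perm Y) (y : Y) :
    (φ ^ orbitExponent φ y) (orbitRep φ y) = y :=
  (exists_zpow_orbitRep_eq φ y).choose_spec

/-- The eigenvector of the permutation operator of `φ` for the eigenvalue `ζ` that takes the
value `1` at every orbit representative. -/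
noncomputable def orbitWeight {K : Type*} [DivisionRing K] (ζ : K) (φ : Perm Y) (y : Y) : K :=
  ζ ^ (-orbitExponent φ y)

section orbitWeight

variable {K : Type*} [DivisionRing K] {ζ : K} (hζ0 : ζ ≠ 0)
include hζ0

theorem orbitWeight_ne_zero (y : Y) : orbitWeight ζ φ y ≠ 0 :=
  zpow_ne_zero _ hζ0

variable (hζ : ∀ y : Y, ζ ^ period φ y = 1)
include hζ

theorem orbitWeight_apply_self (y : Y) : orbitWeight ζ φ (φ y) = ζ⁻¹ * orbitWeight ζ φ y := by
  have h : (φ ^ (orbitExponent φ y + 1)) (orbitRep φ y)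
      = (φ ^ orbitExponent φ (φ y)) (orbitRep φ y) := by
    rw [add_comm, zpow_one_add, Perm.mul_apply, zpow_orbitExponent_apply,
      ← orbitRep_apply_self φ y, zpow_orbitExponent_apply]
  have hdvd := period_dvd_sub_of_zpow_apply_eq h
  rw [← neg_sub_neg] at hdvd
  rw [orbitWeight, orbitWeight, zpow_eq_zpow_of_dvd_sub hζ0 (hζ _) hdvd, neg_add, add_comm,
    zpow_add₀ hζ0, zpow_neg_one]

theorem orbitWeight_orbitRep (y : Y) : orbitWeight ζ φ (orbitRep φ y) = 1 := by
  have h : (φ ^ (0 : ℤ)) (orbitRep φ y) = (φ ^ orbitExponent φ (orbitRep φ y)) (orbitRep φ y) := by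
    conv_rhs => arg 2; rw [← orbitRep_eq_of_orbitRel (orbitRel_orbitRep φ y)]
    rw [zpow_orbitExponent_apply, zpow_zero, Perm.one_apply]
  have hdvd := period_dvd_sub_of_zpow_apply_eq h
  rw [← neg_sub_neg] at hdvd
  rw [orbitWeight, zpow_eq_zpow_of_dvd_sub hζ0 (hζ _) hdvd, neg_zero, zpow_zero]

end orbitWeight

section permOperator

variable {K : Type*} [Field K] {A : Module.End K (Y → K)} {ζ : K} (hA : ∀ f y, A f (φ y) = f y)
include hA

theorem mem_eigenspace_iff_of_apply_perm {f : Y → K} :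
    f ∈ A.eigenspace ζ ↔ ∀ y, f y = ζ * f (φ y) := by
  rw [Module.End.mem_eigenspace_iff, funext_iff, φ.surjective.forall]
  simp only [hA, Pi.smul_apply, smul_eq_mul]

variable (hζ0 : ζ ≠ 0) (hζ : ∀ y : Y, ζ ^ period φ y = 1)
include hζ0 hζ

theorem eq_orbitWeight_mul_of_mem_eigenspace {f : Y → K} (hf : f ∈ A.eigenspace ζ) (y : Y) :
    f y = orbitWeight ζ φ y * f (orbitRep φ y) := by
  have hinv (y : Y) : f (φ y) / orbitWeight ζ φ (φ y) = f y / orbitWeight ζ φ y := by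
    rw [(mem_eigenspace_iff_of_apply_perm hA).mp hf y, orbitWeight_apply_self hζ0 hζ]
    field_simp
  have h := apply_eq_of_orbitRel (g := fun y => f y / orbitWeight ζ φ y) hinv
    (orbitRel_orbitRep φ y)
  rw [orbitWeight_orbitRep hζ0 hζ, div_one, eq_div_iff (orbitWeight_ne_zero hζ0 y)] at h
  rw [← h, mul_comm]

theorem orbitWeight_mul_mem_eigenspace (g : Quotient (orbitRel (zpowers φ) Y) → K) :
    (fun y => orbitWeight ζ φ y * g (Quotient.mk _ y)) ∈ A.eigenspace ζ := by
  refine (mem_eigenspace_iff_of_apply_perm hA).mpr fun y => ?_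
  rw [orbitWeight_apply_self hζ0 hζ, Quotient.sound (orbitRel_apply_self φ y), mul_assoc,
    mul_inv_cancel_left₀ hζ0]

noncomputable def eigenspaceEquivOrbitFun :
    A.eigenspace ζ ≃ₗ[K] (Quotient (orbitRel (zpowers φ) Y) → K) where
  toFun f q := f.1 q.out
  map_add' _ _ := rfl
  map_smul' _ _ := rfl
  invFun g :=
    ⟨fun y => orbitWeight ζ φ y * g (Quotient.mk _ y), orbitWeight_mul_mem_eigenspace hA hζ0 hζ g⟩
  left_inv f := Subtype.ext <| funext fun y =>
    (eq_orbitWeight_mul_of_mem_eigenspace hA hζ0 hζ f.2 y).symm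
  right_inv g := funext <| Quotient.ind fun y => by
    change orbitWeight ζ φ (orbitRep φ y) * g (Quotient.mk _ (orbitRep φ y)) = g (Quotient.mk _ y)
    rw [orbitWeight_orbitRep hζ0 hζ, one_mul, orbitRep, Quotient.out_eq]

theorem finrank_eigenspace_eq_card_orbits [Finite Y] :
    finrank K (A.eigenspace ζ) = Nat.card (Quotient (orbitRel (zpowers φ) Y)) := by
  have := Fintype.ofFinite (Quotient (orbitRel (zpowers φ) Y))
  rw [(eigenspaceEquivOrbitFun hA hζ0 hζ).finrank_eq, finrank_pi, Nat.card_eq_fintype_card]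

end permOperator

end Equiv.Perm

theorem Module.End.exists_pow_eq_pow_finrank_eigenspace {K V : Type*} [Field K] [AddCommGroup V]
    [Module K V] {A B : End K V} {p : ℕ} (hB : B ^ p = A) (ζ : K) :
    ∃ d : K, d ^ p = ζ ^ finrank K (A.eigenspace ζ) := by
  have hc : Commute A B := hB ▸ (Commute.refl B).pow_left p
  have hmaps : ∀ x ∈ A.eigenspace ζ, B x ∈ A.eigenspace ζ := mapsTo_genEigenspace_of_comm hc ζ 1
  have hBr : B.restrict hmaps ^ p = ζ • 1 := by
    ext x
    rw [pow_restrict, LinearMap.coe_restrict_apply, hB, mem_eigenspace_iff.mp x.2]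
    rfl
  refine ⟨LinearMap.det (B.restrict hmaps), ?_⟩
  rw [← map_pow, hBr, LinearMap.det_smul, map_one, mul_one]

theorem p_dvd_orbits_of_root_of_induced_operator_general
    (p : ℕ) (hp : p.Prime) (K : Type*) [Field K]
    (ζ : K) (hζ : IsPrimitiveRoot ζ p)
    (hK : ∀ q : ℤ, ¬ (p : ℤ) ∣ q → ¬ ∃ x : K, x ^ p = ζ ^ q)
    (Y : Type*) [Fintype Y]
    (φ : Equiv.Perm Y) (hφp : φ ^ p = 1) (hfix : ∀ y : Y, φ y ≠ y)
    (A B : Module.End K (Y → K))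
    (hA : ∀ (f : Y → K) (y : Y), A f (φ y) = f y)
    (hB : B ^ p = A) :
    p ∣ Nat.card (Quotient (MulAction.orbitRel (Subgroup.zpowers φ) Y)) := by
  have hζ_period (y : Y) : ζ ^ period φ y = 1 := by
    rw [period_eq_prime hp hφp (hfix y), hζ.pow_eq_one]
  obtain ⟨d, hd⟩ := Module.End.exists_pow_eq_pow_finrank_eigenspace hB ζ
  rw [Equiv.Perm.finrank_eigenspace_eq_card_orbits hA (hζ.ne_zero hp.ne_zero) hζ_period] at hd
  by_contra hndvd
  exact hK _ (Int.natCast_dvd_natCast.not.mpr hndvd) ⟨d, by rwa [zpow_natCast]⟩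

/-- Let `p` be prime and `K` a field with `char K ≠ p`, containing a
primitive `p`-th root of unity `ζ`, such that `x ^ p = ζ ^ q` has no solution in `K`
for `p ∤ q`. Let `φ` be a fixed-point free permutation of a finite set `Y` with
`φ ^ p = 1`, let `A` be the induced operator on the free `K`-vector space on `Y`
(modelled as `Y → K`), and suppose `B ^ p = A` for some linear `B`. Then `p` divides
the number of orbits of `φ` on `Y`. -/
theorem p_dvd_orbits_of_root_of_induced_operator
    (p : ℕ) (hp : p.Prime) (K : Type*) [Field K] (hchar : ringChar K ≠ p)
    (ζ : K) (hζ : IsPrimitiveRoot ζ p)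
    (hK : ∀ q : ℤ, ¬ (p : ℤ) ∣ q → ¬ ∃ x : K, x ^ p = ζ ^ q)
    (Y : Type*) [Fintype Y]
    (φ : Equiv.Perm Y) (hφp : φ ^ p = 1) (hfix : ∀ y : Y, φ y ≠ y)
    (A B : Module.End K (Y → K))
    (hA : ∀ (f : Y → K) (y : Y), A f (φ y) = f y)
    (hB : B ^ p = A) :
    p ∣ Nat.card (Quotient (MulAction.orbitRel (Subgroup.zpowers φ) Y)) :=
  p_dvd_orbits_of_root_of_induced_operator_general p hp K ζ hζ hK Y φ hφp hfix A B hA hB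
end

section
/- Let B and C be barcodes (finite multisets of half-open intervals (a,b] in R). Suppose the bottleneck distance between B and C is strictly less than c, and suppose there is an interval I of length > 4c such that the multiplicity m(B, I) (the number of bars of B, counted with multiplicity, containing I) equals m(B, I^{2c}) = l, where I^{2c} denotes I shrunk by 2c at each endpoint. Then m(C, I^c) = l, where I^c denotes I shrunk by c at each endpoint. -/
open scoped Classical

/-- A barcode is a finite multiset of pairs `(a, b)` representing half-open
intervals `(a, b] ⊂ ℝ`. `barMult B I` is the number of bars of `B` (with
multiplicity) containing the interval `I = (I.1, I.2]`, i.e. bars `(a, b]` with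
`a ≤ I.1` and `I.2 ≤ b`. -/
noncomputable def barMult (B : Multiset (ℝ × ℝ)) (I : ℝ × ℝ) : ℕ :=
  Multiset.card (B.filter fun J => J.1 ≤ I.1 ∧ I.2 ≤ J.2)

/-- A `δ`-matching between barcodes `B` and `C`: a multiset `M` of pairs of bars
whose first (resp. second) projections form a sub-multiset of `B` (resp. `C`),
containing all bars of `B` (resp. `C`) of length `> 2δ`, and such that matched bars
`I, J` satisfy `I ⊆ J^{-δ}` and `J ⊆ I^{-δ}` (where `(a,b]^{-δ} = (a-δ, b+δ]`). -/
def IsDeltaMatching (δ : ℝ) (B C : Multiset (ℝ × ℝ))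
    (M : Multiset ((ℝ × ℝ) × (ℝ × ℝ))) : Prop :=
  M.map Prod.fst ≤ B ∧ M.map Prod.snd ≤ C ∧
  (B.filter fun I => 2 * δ < I.2 - I.1) ≤ M.map Prod.fst ∧
  (C.filter fun J => 2 * δ < J.2 - J.1) ≤ M.map Prod.snd ∧
  ∀ q ∈ M, q.2.1 - δ ≤ q.1.1 ∧ q.1.2 ≤ q.2.2 + δ ∧
    q.1.1 - δ ≤ q.2.1 ∧ q.2.2 ≤ q.1.2 + δ

/-- The bottleneck distance: the infimum of `δ > 0` admitting a `δ`-matching. -/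
noncomputable def bottleneckDist (B C : Multiset (ℝ × ℝ)) : ℝ :=
  sInf {δ : ℝ | 0 < δ ∧ ∃ M, IsDeltaMatching δ B C M}

/-- For large enough `δ`, the empty matching works, so the defining set of the
bottleneck distance is nonempty. -/
lemma bottleneck_set_nonempty (B C : Multiset (ℝ × ℝ)) :
    {δ : ℝ | 0 < δ ∧ ∃ M, IsDeltaMatching δ B C M}.Nonempty := by
  obtain ⟨D, hD⟩ := ((B + C).toFinset.image fun p => p.2 - p.1).exists_le
  refine ⟨|D| / 2 + 1, ⟨by positivity, 0, ?_⟩⟩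
  have hbound : ∀ p ∈ B + C, p.2 - p.1 ≤ D := by
    intro p hp
    exact hD _ (Finset.mem_image_of_mem _ (Multiset.mem_toFinset.mpr hp))
  have h2 : ∀ p ∈ B + C, ¬ (2 * (|D| / 2 + 1) < p.2 - p.1) := by
    intro p hp
    have := hbound p hp
    have := le_abs_self D
    push_neg
    linarith
  refine ⟨by simp, by simp, ?_, ?_, by simp⟩
  · simp only [Multiset.map_zero]
    rw [Multiset.filter_eq_nil.mpr fun p hp => h2 p (Multiset.mem_add.mpr (Or.inl hp))]
  · simp only [Multiset.map_zero]
    rw [Multiset.filter_eq_nil.mpr fun p hp => h2 p (Multiset.mem_add.mpr (Or.inr hp))]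

/-- If the bottleneck distance between barcodes `B` and `C` is `< c`,
and `I = (a, b]` is an interval of length `> 4c` such that the number of bars of `B`
containing `I` equals the number containing `I^{2c} = (a+2c, b-2c]`, both equal to
`l`, then the number of bars of `C` containing `I^c = (a+c, b-c]` is also `l`. -/
theorem multiplicity_stable_under_bottleneck
    (B C : Multiset (ℝ × ℝ)) (c : ℝ) (hc : 0 < c)
    (hd : bottleneckDist B C < c)
    (a b : ℝ) (hlen : 4 * c < b - a) (l : ℕ)
    (hB : barMult B (a, b) = l)
    (hB2 : barMult B (a + 2 * c, b - 2 * c) = l) :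
    barMult C (a + c, b - c) = l := by
  -- extract a δ-matching with δ < c
  have hbdd : BddBelow {δ : ℝ | 0 < δ ∧ ∃ M, IsDeltaMatching δ B C M} :=
    ⟨0, fun x hx => le_of_lt hx.1⟩
  obtain ⟨δ, ⟨hδ0, M, hM⟩, hδc⟩ :=
    (csInf_lt_iff hbdd (bottleneck_set_nonempty B C)).mp hd
  obtain ⟨hMB, hMC, hBM, hCM, hq⟩ := hM
  -- predicates
  set P : ℝ × ℝ → Prop := fun J => J.1 ≤ a ∧ b ≤ J.2 with hP
  set Q : ℝ × ℝ → Prop := fun J => J.1 ≤ a + c ∧ b - c ≤ J.2 with hQ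
  set R : ℝ × ℝ → Prop := fun J => J.1 ≤ a + 2 * c ∧ b - 2 * c ≤ J.2 with hR
  -- lower bound : l ≤ barMult C (a+c, b-c)
  have h1 : B.filter P ≤ M.map Prod.fst := by
    refine le_trans (Multiset.monotone_filter_right B ?_) hBM
    intro J hJ
    obtain ⟨h1, h2⟩ := hJ
    linarith
  have h2 : B.filter P ≤ (M.map Prod.fst).filter P :=
    Multiset.le_filter.mpr ⟨h1, fun x hx => Multiset.of_mem_filter hx⟩
  have h3 : Multiset.card ((M.map Prod.fst).filter P)
      = Multiset.card (M.filter fun q => P q.1) := by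
    rw [← Multiset.countP_eq_card_filter, Multiset.countP_map,
      ← Multiset.countP_eq_card_filter]
  have h4 : (M.filter fun q => P q.1) ≤ M.filter fun q => Q q.2 := by
    refine Multiset.le_filter.mpr ⟨Multiset.filter_le _ _, fun x hx => ?_⟩
    obtain ⟨hx1, hx2⟩ := Multiset.of_mem_filter hx
    obtain ⟨g1, g2, g3, g4⟩ := hq x (Multiset.mem_of_mem_filter hx)
    constructor <;> linarith
  have h5 : Multiset.card ((M.map Prod.snd).filter Q)
      = Multiset.card (M.filter fun q => Q q.2) := by
    rw [← Multiset.countP_eq_card_filter, Multiset.countP_map,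
      ← Multiset.countP_eq_card_filter]
  have h6 : (M.map Prod.snd).filter Q ≤ C.filter Q := Multiset.filter_le_filter Q hMC
  have hlow : l ≤ Multiset.card (C.filter Q) := by
    calc l = Multiset.card (B.filter P) := hB.symm
    _ ≤ Multiset.card ((M.map Prod.fst).filter P) := Multiset.card_le_card h2
    _ = Multiset.card (M.filter fun q => P q.1) := h3
    _ ≤ Multiset.card (M.filter fun q => Q q.2) := Multiset.card_le_card h4
    _ = Multiset.card ((M.map Prod.snd).filter Q) := h5.symm
    _ ≤ Multiset.card (C.filter Q) := Multiset.card_le_card h6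
  -- upper bound : barMult C (a+c, b-c) ≤ l
  have g1 : C.filter Q ≤ M.map Prod.snd := by
    refine le_trans (Multiset.monotone_filter_right C ?_) hCM
    intro J hJ
    obtain ⟨h1, h2⟩ := hJ
    linarith
  have g2 : C.filter Q ≤ (M.map Prod.snd).filter Q :=
    Multiset.le_filter.mpr ⟨g1, fun x hx => Multiset.of_mem_filter hx⟩
  have g3 : Multiset.card ((M.map Prod.snd).filter Q)
      = Multiset.card (M.filter fun q => Q q.2) := by
    rw [← Multiset.countP_eq_card_filter, Multiset.countP_map,
      ← Multiset.countP_eq_card_filter]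
  have g4 : (M.filter fun q => Q q.2) ≤ M.filter fun q => R q.1 := by
    refine Multiset.le_filter.mpr ⟨Multiset.filter_le _ _, fun x hx => ?_⟩
    obtain ⟨hx1, hx2⟩ := Multiset.of_mem_filter hx
    obtain ⟨w1, w2, w3, w4⟩ := hq x (Multiset.mem_of_mem_filter hx)
    constructor <;> linarith
  have g5 : Multiset.card ((M.map Prod.fst).filter R)
      = Multiset.card (M.filter fun q => R q.1) := by
    rw [← Multiset.countP_eq_card_filter, Multiset.countP_map,
      ← Multiset.countP_eq_card_filter]
  have g6 : (M.map Prod.fst).filter R ≤ B.filter R := Multiset.filter_le_filter R hMB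
  have hup : Multiset.card (C.filter Q) ≤ l := by
    calc Multiset.card (C.filter Q)
        ≤ Multiset.card ((M.map Prod.snd).filter Q) := Multiset.card_le_card g2
    _ = Multiset.card (M.filter fun q => Q q.2) := g3
    _ ≤ Multiset.card (M.filter fun q => R q.1) := Multiset.card_le_card g4
    _ = Multiset.card ((M.map Prod.fst).filter R) := g5.symm
    _ ≤ Multiset.card (B.filter R) := Multiset.card_le_card g6
    _ = l := hB2
  exact le_antisymm hup hlow
end

section
/- Let V be a Z/p persistence module that is a full p-th power, i.e., its structure automorphism A satisfies A = B^p for some endomorphism B of the persistence module. Then for every primitive p-th root of unity ζ and every interval I ⊂ R, the multiplicity m(B(L_ζ), I) of bars of the barcode of the ζ-eigenspace persistence module L_ζ containing I is divisible by p. -/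
open Polynomial


set_option maxHeartbeats 1000000 in
lemma aux_dvd_finrank (p : ℕ) (hp : p.Prime) (K : Type*) [Field K]
    (ζ : K) (hζ : ∀ b : K, b ^ p ≠ ζ)
    (W : Type*) [AddCommGroup W] [Module K W] [FiniteDimensional K W]
    (f : Module.End K W) (hf : f ^ p = ζ • (1 : Module.End K W)) :
    p ∣ Module.finrank K W := by
  rcases subsingleton_or_nontrivial W with hW | hW
  · simp [Module.finrank_zero_of_subsingleton]
  have hirr : Irreducible (X ^ p - C ζ : K[X]) :=
    X_pow_sub_C_irreducible_of_prime hp hζ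
  have h0 : (aeval f) (X ^ p - C ζ : K[X]) = 0 := by
    simp [map_sub, aeval_X_pow, aeval_C, hf, Algebra.algebraMap_eq_smul_one]
  haveI : Fact (Irreducible (X ^ p - C ζ : K[X])) := ⟨hirr⟩
  set F := AdjoinRoot (X ^ p - C ζ : K[X]) with hF
  have hne : (X ^ p - C ζ : K[X]) ≠ 0 := hirr.ne_zero
  have hdim : Module.finrank K F = p := by
    rw [(AdjoinRoot.powerBasis hne).finrank, AdjoinRoot.powerBasis_dim]
    simp [natDegree_X_pow_sub_C]
  let φ : F →+* Module.End K W :=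
    Ideal.Quotient.lift _ (aeval f).toRingHom (by
      intro a ha
      rw [Ideal.mem_span_singleton] at ha
      obtain ⟨c, rfl⟩ := ha
      simp [h0])
  have hφmk : ∀ q : K[X], φ (AdjoinRoot.mk _ q) = aeval f q := fun q => rfl
  have hφalg : ∀ k : K, φ (algebraMap K F k) = k • (1 : Module.End K W) := by
    intro k
    rw [AdjoinRoot.algebraMap_eq]
    show φ (AdjoinRoot.mk _ (C k)) = _
    rw [hφmk, aeval_C, Algebra.algebraMap_eq_smul_one]
  letI : Module F W := Module.compHom W φ
  have hsmul : ∀ (x : F) (w : W), x • w = φ x w := fun _ _ => rfl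
  letI : IsScalarTower K F W := ⟨fun k x w => by
    rw [hsmul, hsmul, Algebra.smul_def, map_mul, hφalg]
    simp⟩
  haveI : FiniteDimensional F W := Module.Finite.of_restrictScalars_finite K F W
  have := Module.finrank_mul_finrank K F W
  rw [hdim] at this
  exact ⟨Module.finrank F W, this.symm⟩


/-- Let `p` be prime and `K` a field with `char K ≠ p`, containing a
primitive `p`-th root of unity `ζ`, such that `x ^ p = ζ ^ q` has no solution in `K`
for `p ∤ q`. Let `(V, θ)` be a (pointwise finite-dimensional) persistence module of
`K`-vector spaces with a `ℤ/p`-action `A` (`A_t ^ p = 1`, commuting with the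
structure maps) which is a full `p`-th power: `A_t = B_t ^ p` for a persistence
module endomorphism `B`. Then for every interval, the multiplicity of bars of the
barcode of the `ζ`-eigenspace module `L_ζ` containing it — i.e. the rank of the
persistence map of `L_ζ` across the interval — is divisible by `p`. -/
theorem full_power_eigenspace_multiplicity_divisible
    (p : ℕ) (hp : p.Prime) (K : Type*) [Field K] (hchar : ringChar K ≠ p)
    (ζ : K) (hζ : IsPrimitiveRoot ζ p)
    (hK : ∀ q : ℤ, ¬ (p : ℤ) ∣ q → ¬ ∃ x : K, x ^ p = ζ ^ q)
    (V : ℝ → Type*) [∀ t, AddCommGroup (V t)] [∀ t, Module K (V t)]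
    [∀ t, FiniteDimensional K (V t)]
    (θ : ∀ s t : ℝ, V s →ₗ[K] V t)
    (θ_id : ∀ t, θ t t = LinearMap.id)
    (θ_comp : ∀ s t r : ℝ, s ≤ t → t ≤ r → (θ t r).comp (θ s t) = θ s r)
    (A B : ∀ t, Module.End K (V t))
    (hAθ : ∀ s t : ℝ, (A t).comp (θ s t) = (θ s t).comp (A s))
    (hBθ : ∀ s t : ℝ, (B t).comp (θ s t) = (θ s t).comp (B s))
    (hAp : ∀ t, (A t) ^ p = 1)
    (hBA : ∀ t, (B t) ^ p = A t) :
    ∀ s t : ℝ, s ≤ t →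
      p ∣ Module.finrank K
        ((LinearMap.ker (A s - ζ • (1 : Module.End K (V s)))).map (θ s t)) := by
  intro s t hst
  -- basic facts
  have hmemker : ∀ u (x : V u), x ∈ LinearMap.ker (A u - ζ • (1 : Module.End K (V u))) ↔
      A u x = ζ • x := by
    intro u x
    rw [LinearMap.mem_ker, LinearMap.sub_apply, LinearMap.smul_apply, Module.End.one_apply,
      sub_eq_zero]
  have hAB : ∀ u (x : V u), A u (B u x) = B u (A u x) := by
    intro u x
    have : A u * B u = B u * A u := by rw [← hBA u, ← pow_succ, ← pow_succ']
    exact congrFun (congrArg (DFunLike.coe) this) x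
  set Ls := LinearMap.ker (A s - ζ • (1 : Module.End K (V s))) with hLs
  set W := Ls.map (θ s t) with hWdef
  -- A t acts as ζ on W
  have hAW : ∀ w ∈ W, A t w = ζ • w := by
    rintro _ ⟨x, hx, rfl⟩
    have h1 : A t (θ s t x) = θ s t (A s x) := congrFun (congrArg DFunLike.coe (hAθ s t)) x
    rw [h1, (hmemker s x).mp hx, map_smul]
  -- B t preserves W
  have hBW : ∀ w ∈ W, B t w ∈ W := by
    rintro _ ⟨x, hx, rfl⟩
    refine ⟨B s x, ?_, ?_⟩
    · simp only [SetLike.mem_coe] at hx ⊢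
      rw [hLs, hmemker] at hx ⊢
      rw [hAB, hx, map_smul]
    · exact (congrFun (congrArg DFunLike.coe (hBθ s t)) x).symm
  set f : Module.End K W := (B t).restrict hBW with hfdef
  have hfp : f ^ p = ζ • (1 : Module.End K W) := by
    rw [hfdef, Module.End.pow_restrict]
    ext w
    simp only [LinearMap.restrict_coe_apply, LinearMap.smul_apply, Module.End.one_apply,
      SetLike.val_smul]
    rw [hBA t]
    exact hAW w w.2
  have hKp : ∀ b : K, b ^ p ≠ ζ := by
    intro b hb
    refine hK 1 (fun h => ?_) ⟨b, by simpa using hb⟩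
    have : p ∣ 1 := Int.ofNat_dvd.mp (by simpa using h)
    exact hp.one_lt.ne' (Nat.dvd_one.mp this)
  exact aux_dvd_finrank p hp K ζ hKp W f hfp
end

section
/- Let (V, θ) be a persistence module with a compatible family of endomorphisms A_t : V_t → V_t (satisfying A_t ∘ θ_st = θ_st ∘ A_s for s < t). Define W_t = ker(A_t - id), let L_t = V_t / W_t with induced persistence maps π_st, and define the spread ŵ(V, θ; A) as the supremum of d > 0 such that θ_{s,s+d} ∘ (A_s - id) ≠ 0 for some s. Then ŵ(V, θ; A) equals β(L, π), the length of the longest finite bar in the barcode of (L, π). -/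
/-- Let `(V, θ)` be a (compactly supported, pointwise finite-
dimensional) persistence module with a compatible family of endomorphisms
`A_t : V_t → V_t` (`A_t ∘ θ_{st} = θ_{st} ∘ A_s`). Let `W_t = ker (A_t - id)`,
`L_t = V_t / W_t` with induced persistence maps `π_{st}`. Then the spread
`ŵ(V, θ; A) = sup {d > 0 : θ_{s,s+d} ∘ (A_s - id) ≠ 0 for some s}` equals
`β(L, π) = sup {d > 0 : π_{s,s+d} ≠ 0 for some s}`, the length of the longest
finite bar in the barcode of `(L, π)`. -/
theorem spread_eq_longest_bar
    (K : Type*) [Field K]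
    (V : ℝ → Type*) [∀ t, AddCommGroup (V t)] [∀ t, Module K (V t)]
    [∀ t, FiniteDimensional K (V t)]
    (θ : ∀ s t : ℝ, V s →ₗ[K] V t)
    (θ_id : ∀ t, θ t t = LinearMap.id)
    (θ_comp : ∀ s t r : ℝ, s ≤ t → t ≤ r → (θ t r).comp (θ s t) = θ s r)
    (hsupp : ∃ T : ℝ, ∀ t : ℝ, T < |t| → ∀ v : V t, v = 0)
    (A : ∀ t, V t →ₗ[K] V t)
    (hA : ∀ s t : ℝ, (A t).comp (θ s t) = (θ s t).comp (A s)) :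
    sSup {d : ℝ | 0 < d ∧ ∃ s : ℝ, (θ s (s + d)).comp (A s - LinearMap.id) ≠ 0} =
    sSup {d : ℝ | 0 < d ∧ ∃ s : ℝ,
      Submodule.mapQ (LinearMap.ker (A s - LinearMap.id))
        (LinearMap.ker (A (s + d) - LinearMap.id)) (θ s (s + d))
        (fun v hv => by
          have h1 : A s v = v := by
            have h0 := LinearMap.mem_ker.mp hv
            rw [LinearMap.sub_apply, LinearMap.id_apply, sub_eq_zero] at h0
            exact h0
          have h2 := congrArg (fun g : V s →ₗ[K] V (s + d) => g v) (hA s (s + d))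
          simp only [LinearMap.comp_apply] at h2
          refine Submodule.mem_comap.mpr (LinearMap.mem_ker.mpr ?_)
          rw [LinearMap.sub_apply, LinearMap.id_apply, sub_eq_zero, h2, h1]) ≠ 0} := by
  congr 1
  ext d
  simp only [Set.mem_setOf_eq]
  refine and_congr_right fun _ => exists_congr fun s => not_congr ?_
  constructor
  · intro h
    refine LinearMap.ext fun x => ?_
    obtain ⟨v, rfl⟩ := Submodule.Quotient.mk_surjective _ x
    rw [Submodule.mapQ_apply, LinearMap.zero_apply, Submodule.Quotient.mk_eq_zero,
      LinearMap.mem_ker]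
    have h2 := congrArg (fun g : V s →ₗ[K] V (s + d) => g v) (hA s (s + d))
    simp only [LinearMap.comp_apply] at h2
    have h3 := congrArg (fun g : V s →ₗ[K] V (s + d) => g v) h
    simp only [LinearMap.comp_apply, LinearMap.sub_apply, LinearMap.id_apply,
      LinearMap.zero_apply, map_sub] at h3 ⊢
    rw [h2, h3]
  · intro h
    refine LinearMap.ext fun v => ?_
    have h3 := congrArg (fun g => g (Submodule.Quotient.mk (p := LinearMap.ker (A s - LinearMap.id)) v)) h
    simp only [Submodule.mapQ_apply, LinearMap.zero_apply, Submodule.Quotient.mk_eq_zero,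
      LinearMap.mem_ker] at h3
    have h2 := congrArg (fun g : V s →ₗ[K] V (s + d) => g v) (hA s (s + d))
    simp only [LinearMap.comp_apply] at h2
    simp only [LinearMap.sub_apply, LinearMap.id_apply, LinearMap.zero_apply] at h3
    simp only [LinearMap.comp_apply, LinearMap.sub_apply, LinearMap.id_apply,
      LinearMap.zero_apply, map_sub]
    rw [h2] at h3; exact h3
end

section
/- With A_{λ,j} as above and Ā_{λ,j,i} = A_{λ,j} ∘ ⋯ ∘ A_{λ,i} for i ≤ j, setting ε̄_{j,i} = Π_{k=i-1}^{j-1} ε_{2k+1}ε_{2k+4} (indices of ε taken mod 2p), the matrix Ā_{λ,j,i} has entries which are polynomials in λ with leading terms: (1,1)-entry ε̄_{j,i} λ^{2(j-i+1)}, (1,2)-entry -ε̄_{j,i} ε_{2i-1} λ^{2(j-i+1)-1}, (2,1)-entry -ε̄_{j,i} ε_{2j+2} λ^{2(j-i+1)-1}, and (2,2)-entry ε̄_{j,i} ε_{2i-1} ε_{2j+2} λ^{2(j-i+1)-2}, where in each case the remaining terms have strictly lower degree in λ. -/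
open Filter

/-- The matrix `A_{λ,k} = [[1 + ε_{2k+2}ε_{2k-1}λ², -ε_{2k+2}λ], [-ε_{2k-1}λ, 1]]`. -/
noncomputable def eggMat (ε : ℕ → ℝ) (lam : ℝ) (k : ℕ) : Matrix (Fin 2) (Fin 2) ℝ :=
  !![1 + ε (2 * k + 2) * ε (2 * k - 1) * lam ^ 2, -(ε (2 * k + 2) * lam);
     -(ε (2 * k - 1) * lam), 1]

/-- The ordered product `Ā_{λ,j,i} = A_{λ,j} ⋯ A_{λ,i}` for `i ≤ j`. -/
noncomputable def eggProd (ε : ℕ → ℝ) (i j : ℕ) (lam : ℝ) : Matrix (Fin 2) (Fin 2) ℝ :=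
  (((List.range (j + 1 - i)).map fun t => eggMat ε lam (j - t))).prod

section Helpers

open Asymptotics

lemma egg_hzpowO (m n : ℤ) (h : m ≤ n) :
    (fun lam : ℝ => lam ^ m) =O[atTop] fun lam : ℝ => lam ^ n := by
  refine IsBigO.of_bound 1 ?_
  filter_upwards [eventually_ge_atTop (1:ℝ)] with l hl
  have h0 : (0:ℝ) ≤ l := by linarith
  rw [Real.norm_eq_abs, Real.norm_eq_abs, abs_of_nonneg (zpow_nonneg h0 _),
    abs_of_nonneg (zpow_nonneg h0 _)]
  rw [one_mul]; exact zpow_le_zpow_right₀ hl h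

lemma egg_powO (n : ℕ) : (fun l : ℝ => l ^ n) =O[atTop] fun l : ℝ => l ^ (n:ℤ) := by
  simp only [zpow_natCast]; exact isBigO_refl _ _

lemma egg_idO : (fun l : ℝ => l) =O[atTop] fun l : ℝ => l ^ (1:ℤ) := by
  simpa using egg_powO 1

lemma egg_bigOmul {f g : ℝ → ℝ} {a b c : ℤ} (hf : f =O[atTop] fun l : ℝ => l ^ a)
    (hg : g =O[atTop] fun l : ℝ => l ^ b) (h : a + b ≤ c) :
    (fun l => f l * g l) =O[atTop] fun l : ℝ => l ^ c := by
  refine IsBigO.trans ?_ (egg_hzpowO _ _ h)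
  refine (hf.mul hg).congr' EventuallyEq.rfl ?_
  filter_upwards [eventually_gt_atTop (0:ℝ)] with l hl
  rw [zpow_add₀ hl.ne']

lemma egg_constO (c : ℝ) (e : ℤ) (he : 0 ≤ e) :
    (fun _ : ℝ => c) =O[atTop] fun l : ℝ => l ^ e := by
  refine IsBigO.trans ?_ (egg_hzpowO 0 e he)
  refine ((isBigO_refl (fun l : ℝ => l ^ (0:ℤ)) atTop).const_mul_left c).congr' ?_
    EventuallyEq.rfl
  filter_upwards with l
  simp

lemma eggProd_base (ε : ℕ → ℝ) (i : ℕ) (lam : ℝ) :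
    eggProd ε i i lam = eggMat ε lam i := by
  unfold eggProd
  rw [show i + 1 - i = 1 by omega]
  rw [show List.range 1 = [0] from rfl]; simp

lemma eggProd_succ (ε : ℕ → ℝ) (i j : ℕ) (h : i ≤ j + 1) (lam : ℝ) :
    eggProd ε i (j+1) lam = eggMat ε lam (j+1) * eggProd ε i j lam := by
  unfold eggProd
  rw [show j + 1 + 1 - i = (j + 1 - i) + 1 by omega, List.range_succ_eq_map]
  simp [List.map_map, Function.comp_def, Nat.succ_sub_succ]

end Helpers

open Asymptotics in
/-- For `1 ≤ i ≤ j ≤ p` and signs `ε_k ∈ {±1}` (periodic mod `2p`),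
the entries of `Ā_{λ,j,i} = A_{λ,j} ⋯ A_{λ,i}` are polynomials in `λ` with leading
terms `ε̄_{j,i} λ^d`, `-ε̄_{j,i} ε_{2i-1} λ^{d-1}`, `-ε̄_{j,i} ε_{2j+2} λ^{d-1}` and
`ε̄_{j,i} ε_{2i-1} ε_{2j+2} λ^{d-2}` (for the `(1,1)`, `(1,2)`, `(2,1)`, `(2,2)`
entries respectively), where `d = 2(j-i+1)` and
`ε̄_{j,i} = ∏_{k=i-1}^{j-1} ε_{2k+1} ε_{2k+4}`; in each case the remaining terms
have strictly lower degree in `λ`. -/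
theorem eggbeater_product_asymptotics
    (p : ℕ) (ε : ℕ → ℝ) (hε : ∀ k, ε k = 1 ∨ ε k = -1)
    (hper : ∀ k, ε (k + 2 * p) = ε k)
    (i j : ℕ) (hi : 1 ≤ i) (hij : i ≤ j) (hjp : j ≤ p) :
    ((fun lam : ℝ => eggProd ε i j lam 0 0 -
        (∏ k ∈ Finset.Icc (i - 1) (j - 1), ε (2 * k + 1) * ε (2 * k + 4)) *
          lam ^ ((2 * (j - i + 1) : ℕ) : ℤ)) =O[atTop]
      fun lam : ℝ => lam ^ ((2 * (j - i + 1) : ℕ) - 1 : ℤ)) ∧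
    ((fun lam : ℝ => eggProd ε i j lam 0 1 +
        (∏ k ∈ Finset.Icc (i - 1) (j - 1), ε (2 * k + 1) * ε (2 * k + 4)) *
          ε (2 * i - 1) * lam ^ ((2 * (j - i + 1) : ℕ) - 1 : ℤ)) =O[atTop]
      fun lam : ℝ => lam ^ ((2 * (j - i + 1) : ℕ) - 2 : ℤ)) ∧
    ((fun lam : ℝ => eggProd ε i j lam 1 0 +
        (∏ k ∈ Finset.Icc (i - 1) (j - 1), ε (2 * k + 1) * ε (2 * k + 4)) *
          ε (2 * j + 2) * lam ^ ((2 * (j - i + 1) : ℕ) - 1 : ℤ)) =O[atTop]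
      fun lam : ℝ => lam ^ ((2 * (j - i + 1) : ℕ) - 2 : ℤ)) ∧
    ((fun lam : ℝ => eggProd ε i j lam 1 1 -
        (∏ k ∈ Finset.Icc (i - 1) (j - 1), ε (2 * k + 1) * ε (2 * k + 4)) *
          ε (2 * i - 1) * ε (2 * j + 2) * lam ^ ((2 * (j - i + 1) : ℕ) - 2 : ℤ)) =O[atTop]
      fun lam : ℝ => lam ^ ((2 * (j - i + 1) : ℕ) - 3 : ℤ)) := by
  clear hper hjp
  induction j, hij using Nat.le_induction with
  | base =>
    have hb : ∀ lam : ℝ, eggProd ε i i lam = eggMat ε lam i := fun lam => eggProd_base ε i lam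
    have hd : 2 * (i - i + 1) = 2 := by omega
    have hk1 : 2 * (i - 1) + 1 = 2 * i - 1 := by omega
    have hk4 : 2 * (i - 1) + 4 = 2 * i + 2 := by omega
    simp only [hb, hd, Finset.Icc_self, Finset.prod_singleton, hk1, hk4]
    have hc2 : ((2:ℕ):ℤ) = 2 := by norm_num
    refine ⟨?_, ?_, ?_, ?_⟩
    · refine (egg_constO 1 (((2:ℕ):ℤ) - 1) (by norm_num)).congr' ?_ EventuallyEq.rfl
      filter_upwards with lam
      simp only [eggMat, Matrix.cons_val', Matrix.cons_val_zero, Matrix.empty_val',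
        Matrix.cons_val_fin_one, Matrix.of_apply, Matrix.vecHead]
      rw [hc2, show (2:ℤ) = ((2:ℕ):ℤ) by norm_num, zpow_natCast]
      ring
    · refine (isBigO_zero _ _).congr' ?_ EventuallyEq.rfl
      filter_upwards with lam
      simp only [eggMat, Matrix.cons_val', Matrix.cons_val_zero, Matrix.cons_val_one,
        Matrix.head_cons, Matrix.empty_val', Matrix.cons_val_fin_one, Matrix.of_apply, Matrix.vecHead]
      rw [hc2, show (2:ℤ) - 1 = 1 by norm_num, zpow_one]
      rcases hε (2 * i - 1) with h1 | h1 <;> rcases hε (2 * i + 2) with h2 | h2 <;>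
        rw [h1, h2] <;> ring
    · refine (isBigO_zero _ _).congr' ?_ EventuallyEq.rfl
      filter_upwards with lam
      simp only [eggMat, Matrix.cons_val', Matrix.cons_val_zero, Matrix.cons_val_one,
        Matrix.head_cons, Matrix.empty_val', Matrix.cons_val_fin_one, Matrix.of_apply, Matrix.vecHead]
      rw [hc2, show (2:ℤ) - 1 = 1 by norm_num, zpow_one]
      rcases hε (2 * i - 1) with h1 | h1 <;> rcases hε (2 * i + 2) with h2 | h2 <;>
        rw [h1, h2] <;> ring
    · refine (isBigO_zero _ _).congr' ?_ EventuallyEq.rfl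
      filter_upwards with lam
      simp only [eggMat, Matrix.cons_val', Matrix.cons_val_zero, Matrix.cons_val_one,
        Matrix.head_cons, Matrix.empty_val', Matrix.cons_val_fin_one, Matrix.of_apply, Matrix.vecHead]
      rw [hc2, show (2:ℤ) - 2 = 0 by norm_num, zpow_zero]
      rcases hε (2 * i - 1) with h1 | h1 <;> rcases hε (2 * i + 2) with h2 | h2 <;>
        rw [h1, h2] <;> ring
  | succ j hij IH =>
    obtain ⟨h00, h01, h10, h11⟩ := IH
    have hs : ∀ lam : ℝ, eggProd ε i (j+1) lam = eggMat ε lam (j+1) * eggProd ε i j lam :=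
      eggProd_succ ε i j (Nat.le_succ_of_le hij)
    set E := (∏ k ∈ Finset.Icc (i - 1) (j - 1), ε (2 * k + 1) * ε (2 * k + 4)) with hE
    set d : ℤ := ((2 * (j - i + 1) : ℕ) : ℤ) with hdd
    have hd2 : 2 ≤ d := by rw [hdd]; omega
    have hIcc : Finset.Icc (i-1) (j+1-1) = insert j (Finset.Icc (i-1) (j-1)) := by
      ext x; simp only [Finset.mem_Icc, Finset.mem_insert]; omega
    have hnot : j ∉ Finset.Icc (i-1) (j-1) := by simp only [Finset.mem_Icc]; omega
    have hprod : (∏ k ∈ Finset.Icc (i-1) (j+1-1), ε (2*k+1) * ε (2*k+4))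
        = (ε (2*j+1) * ε (2*j+4)) * E := by
      rw [hIcc, Finset.prod_insert hnot]
    have hcast : ((2 * (j + 1 - i + 1) : ℕ) : ℤ) = d + 2 := by rw [hdd]; omega
    have hi1 : 2 * (j + 1) - 1 = 2 * j + 1 := by omega
    have hi4 : 2 * (j + 1) + 2 = 2 * j + 4 := by omega
    have e1 : d + 2 - 1 = d + 1 := by ring
    have e2 : d + 2 - 2 = d := by ring
    have e3 : d + 2 - 3 = d - 1 := by ring
    -- derived crude bounds on the entries of the previous product
    have hB00 : (fun lam : ℝ => eggProd ε i j lam 0 0) =O[atTop] fun lam : ℝ => lam ^ d := by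
      have h1 := (h00.trans (egg_hzpowO _ _ (by omega : d - 1 ≤ d))).add
        ((isBigO_refl (fun lam : ℝ => lam ^ d) atTop).const_mul_left E)
      refine h1.congr' ?_ EventuallyEq.rfl
      filter_upwards with lam; ring
    have hB01 : (fun lam : ℝ => eggProd ε i j lam 0 1) =O[atTop]
        fun lam : ℝ => lam ^ (d - 1) := by
      have h1 := (h01.trans (egg_hzpowO _ _ (by omega : d - 2 ≤ d - 1))).add
        ((isBigO_refl (fun lam : ℝ => lam ^ (d-1)) atTop).const_mul_left (-(E * ε (2*i-1))))
      refine h1.congr' ?_ EventuallyEq.rfl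
      filter_upwards with lam; ring
    have hB10 : (fun lam : ℝ => eggProd ε i j lam 1 0) =O[atTop]
        fun lam : ℝ => lam ^ (d - 1) := by
      have h1 := (h10.trans (egg_hzpowO _ _ (by omega : d - 2 ≤ d - 1))).add
        ((isBigO_refl (fun lam : ℝ => lam ^ (d-1)) atTop).const_mul_left (-(E * ε (2*j+2))))
      refine h1.congr' ?_ EventuallyEq.rfl
      filter_upwards with lam; ring
    have hB11 : (fun lam : ℝ => eggProd ε i j lam 1 1) =O[atTop]
        fun lam : ℝ => lam ^ (d - 2) := by
      have h1 := (h11.trans (egg_hzpowO _ _ (by omega : d - 3 ≤ d - 2))).add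
        ((isBigO_refl (fun lam : ℝ => lam ^ (d-2)) atTop).const_mul_left
          (E * ε (2*i-1) * ε (2*j+2)))
      refine h1.congr' ?_ EventuallyEq.rfl
      filter_upwards with lam; ring
    simp only [hprod, hcast, e1, e2, e3, hi1, hi4]
    refine ⟨?_, ?_, ?_, ?_⟩
    · -- (0,0) entry
      have hO : (fun lam : ℝ =>
          eggProd ε i j lam 0 0
          + (ε (2*j+4) * ε (2*j+1)) * (lam ^ 2 *
              (eggProd ε i j lam 0 0 - E * lam ^ d))
          + (-(ε (2*j+4))) * (lam * eggProd ε i j lam 1 0)) =O[atTop]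
            fun lam : ℝ => lam ^ (d+1) :=
        ((hB00.trans (egg_hzpowO _ _ (by omega))).add
          ((egg_bigOmul (egg_powO 2) h00 (by omega)).const_mul_left _)).add
          ((egg_bigOmul egg_idO hB10 (by omega)).const_mul_left _)
      refine hO.congr' ?_ EventuallyEq.rfl
      filter_upwards [eventually_gt_atTop (0:ℝ)] with lam hl
      rw [hs lam]
      simp only [Matrix.mul_apply, Fin.sum_univ_two, eggMat, Matrix.cons_val',
        Matrix.cons_val_zero, Matrix.cons_val_one, Matrix.head_cons, Matrix.empty_val',
        Matrix.cons_val_fin_one, Matrix.of_apply, Matrix.vecHead, hi1, hi4]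
      have hp2 : lam ^ (d+2) = lam ^ d * lam * lam := by
        rw [show d+2 = d+1+1 by ring, zpow_add_one₀ hl.ne', zpow_add_one₀ hl.ne']
      rw [hp2]
      ring
    · -- (0,1) entry
      have hO : (fun lam : ℝ =>
          eggProd ε i j lam 0 1
          + (ε (2*j+4) * ε (2*j+1)) * (lam ^ 2 *
              (eggProd ε i j lam 0 1 + E * ε (2*i-1) * lam ^ (d-1)))
          + (-(ε (2*j+4))) * (lam * eggProd ε i j lam 1 1)) =O[atTop]
            fun lam : ℝ => lam ^ d :=
        ((hB01.trans (egg_hzpowO _ _ (by omega))).add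
          ((egg_bigOmul (egg_powO 2) h01 (by omega)).const_mul_left _)).add
          ((egg_bigOmul egg_idO hB11 (by omega)).const_mul_left _)
      refine hO.congr' ?_ EventuallyEq.rfl
      filter_upwards [eventually_gt_atTop (0:ℝ)] with lam hl
      rw [hs lam]
      simp only [Matrix.mul_apply, Fin.sum_univ_two, eggMat, Matrix.cons_val',
        Matrix.cons_val_zero, Matrix.cons_val_one, Matrix.head_cons, Matrix.empty_val',
        Matrix.cons_val_fin_one, Matrix.of_apply, Matrix.vecHead, hi1, hi4]
      have hp1 : lam ^ (d+1) = lam ^ (d-1) * lam * lam := by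
        rw [show d+1 = (d-1)+1+1 by ring, zpow_add_one₀ hl.ne', zpow_add_one₀ hl.ne']
      rw [hp1]
      ring
    · -- (1,0) entry
      have hO : (fun lam : ℝ =>
          (-(ε (2*j+1))) * (lam * (eggProd ε i j lam 0 0 - E * lam ^ d))
          + eggProd ε i j lam 1 0) =O[atTop] fun lam : ℝ => lam ^ d :=
        ((egg_bigOmul egg_idO h00 (by omega)).const_mul_left _).add
          (hB10.trans (egg_hzpowO _ _ (by omega)))
      refine hO.congr' ?_ EventuallyEq.rfl
      filter_upwards [eventually_gt_atTop (0:ℝ)] with lam hl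
      rw [hs lam]
      simp only [Matrix.mul_apply, Fin.sum_univ_two, eggMat, Matrix.cons_val',
        Matrix.cons_val_zero, Matrix.cons_val_one, Matrix.head_cons, Matrix.empty_val',
        Matrix.cons_val_fin_one, Matrix.of_apply, Matrix.vecHead, hi1, hi4]
      have hp1 : lam ^ (d+1) = lam ^ d * lam := zpow_add_one₀ hl.ne' d
      rw [hp1]
      rcases hε (2*j+4) with h4 | h4 <;> rw [h4] <;> ring
    · -- (1,1) entry
      have hO : (fun lam : ℝ =>
          (-(ε (2*j+1))) * (lam * (eggProd ε i j lam 0 1 + E * ε (2*i-1) * lam ^ (d-1)))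
          + eggProd ε i j lam 1 1) =O[atTop] fun lam : ℝ => lam ^ (d-1) :=
        ((egg_bigOmul egg_idO h01 (by omega)).const_mul_left _).add
          (hB11.trans (egg_hzpowO _ _ (by omega)))
      refine hO.congr' ?_ EventuallyEq.rfl
      filter_upwards [eventually_gt_atTop (0:ℝ)] with lam hl
      rw [hs lam]
      simp only [Matrix.mul_apply, Fin.sum_univ_two, eggMat, Matrix.cons_val',
        Matrix.cons_val_zero, Matrix.cons_val_one, Matrix.head_cons, Matrix.empty_val',
        Matrix.cons_val_fin_one, Matrix.of_apply, Matrix.vecHead, hi1, hi4]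
      have hp1 : lam ^ d = lam ^ (d-1) * lam := by
        rw [show d = (d-1)+1 by ring, zpow_add_one₀ hl.ne']
        rw [show d - 1 + 1 - 1 = d - 1 by ring]
      rw [hp1]
      rcases hε (2*j+4) with h4 | h4 <;> rw [h4] <;> ring
end

section
/- Let Ā_λ = A_{λ,p} ∘ ⋯ ∘ A_{λ,1} be the product of the p matrices A_{λ,j} defined above, and let ε̄ = Π_{k=1}^{2p} ε_k. Then det(Ā_λ - I) = 2 - trace(Ā_λ) = -ε̄ λ^{2p} + (lower order terms in λ); in particular, for all sufficiently large λ, det(Ā_λ - I) ≠ 0, so the equation (Ā_λ - I)x = v has a unique solution for any v ∈ R². -/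
open Filter

/-- The ordered product `Ā_λ = A_{λ,p} ⋯ A_{λ,1}`. -/
noncomputable def eggProdFull (ε : ℕ → ℝ) (p : ℕ) (lam : ℝ) : Matrix (Fin 2) (Fin 2) ℝ :=
  (((List.range p).map fun t => eggMat ε lam (p - t))).prod

/-!
Each factor `A_{λ,k}` is a matrix polynomial in `λ` of degree 2 with diagonal leading coefficient
`diag (ε_{2k+2} ε_{2k-1}, 0)`, so `Ā_λ` has degree at most `2p` and leading coefficient
`diag (∏ₖ ε_{2k+2} ε_{2k-1}, 0)`, whose trace is `ε̄` once the indices are reduced modulo `2p`.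
Since `det Ā_λ = 1`, `det (Ā_λ - I) = 2 - trace Ā_λ` is a real polynomial of degree `2p` with
leading coefficient `-ε̄ ≠ 0`: it is `-ε̄ λ^{2p} + O(λ^{2p-1})` and has finitely many roots.
-/

open Polynomial Asymptotics Matrix

theorem Matrix.det_sub_one_eq_two_sub_trace_of_det_eq_one {R : Type*} [CommRing R]
    {A : Matrix (Fin 2) (Fin 2) R} (hA : A.det = 1) : (A - 1).det = 2 - A.trace := by
  rw [det_fin_two] at hA
  simp only [det_fin_two, trace_fin_two, sub_apply, one_apply_eq, one_apply_ne Fin.zero_ne_one,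
    one_apply_ne (by decide : (1 : Fin 2) ≠ 0)]
  linear_combination hA

theorem Matrix.existsUnique_mulVec_eq {K n : Type*} [Field K] [Fintype n] [DecidableEq n]
    {A : Matrix n n K} (hA : A.det ≠ 0) (v : n → K) : ∃! x, A *ᵥ x = v := by
  have hunit : IsUnit A := (isUnit_iff_isUnit_det A).2 hA.isUnit
  exact Function.Bijective.existsUnique
    ⟨mulVec_injective_iff_isUnit.2 hunit, mulVec_surjective_iff_isUnit.2 hunit⟩ v

theorem Matrix.list_prod_map_diagonal {ι n α : Type*} [Fintype n] [DecidableEq n] [Semiring α]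
    (l : List ι) (d : ι → n → α) :
    (l.map fun i => diagonal (d i)).prod = diagonal (l.map d).prod := by
  simpa [List.map_map, Function.comp_def] using (map_list_prod (diagonalRingHom n α) (l.map d)).symm

theorem List.prod_map_range {M : Type*} [CommMonoid M] (f : ℕ → M) (n : ℕ) :
    ((List.range n).map f).prod = ∏ i ∈ Finset.range n, f i := by
  rw [Finset.prod_eq_multiset_prod, Finset.range_val, ← Multiset.coe_range, Multiset.map_coe,
    Multiset.prod_coe]

theorem Finset.prod_range_even_mul_prod_range_odd {M : Type*} [CommMonoid M] (f : ℕ → M)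
    (p : ℕ) : (∏ t ∈ range p, f (2 * t + 2)) * ∏ t ∈ range p, f (2 * t + 1) =
      ∏ k ∈ Icc 1 (2 * p), f k := by
  induction p with
  | zero => simp
  | succ p ih =>
    rw [prod_range_succ, prod_range_succ, show 2 * (p + 1) = 2 * p + 1 + 1 by ring,
      prod_Icc_succ_top (by omega), prod_Icc_succ_top (by omega), ← ih,
      show 2 * p + 1 + 1 = 2 * p + 2 by ring]
    ac_rfl

theorem Finset.prod_range_sub_pairs_eq_prod_Icc {M : Type*} [CommMonoid M] {f : ℕ → M} {p : ℕ}
    (hp : 0 < p) (hf : f (2 * p + 2) = f 2) :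
    ∏ t ∈ range p, f (2 * (p - t) + 2) * f (2 * (p - t) - 1) = ∏ k ∈ Icc 1 (2 * p), f k := by
  obtain ⟨q, rfl⟩ : ∃ q, p = q + 1 := ⟨p - 1, by omega⟩
  have hreflect : ∏ t ∈ range (q + 1), f (2 * (q + 1 - t) + 2) * f (2 * (q + 1 - t) - 1) =
      ∏ t ∈ range (q + 1), f (2 * t + 4) * f (2 * t + 1) := by
    rw [← prod_range_reflect]
    refine prod_congr rfl fun t ht => ?_
    have : t < q + 1 := mem_range.1 ht
    congr 2 <;> omega
  -- the even indices `4, 6, …, 2q + 4` wrap around to `2, 4, …, 2q + 2`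
  have hwrap : ∏ t ∈ range (q + 1), f (2 * t + 4) = ∏ t ∈ range (q + 1), f (2 * t + 2) := by
    rw [prod_range_succ, prod_range_succ', show 2 * q + 4 = 2 * (q + 1) + 2 by ring, hf]
    simp only [show ∀ k, 2 * (k + 1) + 2 = 2 * k + 4 from fun k => by ring, mul_zero, zero_add]
  rw [hreflect, prod_mul_distrib, hwrap, prod_range_even_mul_prod_range_odd]

theorem Polynomial.natDegree_list_prod_le_of_forall_le {S : Type*} [Semiring S] (l : List S[X])
    {n : ℕ} (hl : ∀ P ∈ l, P.natDegree ≤ n) : l.prod.natDegree ≤ l.length * n := by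
  refine (natDegree_list_prod_le l).trans ?_
  rw [← l.length_map natDegree, ← smul_eq_mul]
  exact List.sum_le_card_nsmul _ _ (by simpa using hl)

theorem Polynomial.isBigO_eval_sub_coeff_mul_pow {P : ℝ[X]} {n : ℕ} (hP : P.natDegree ≤ n) :
    (fun x => P.eval x - P.coeff n * x ^ n) =O[atTop] fun x => x ^ (n - 1) := by
  set Q := P - C (P.coeff n) * X ^ n
  have hQ : Q.degree ≤ (X ^ (n - 1) : ℝ[X]).degree := by
    rw [degree_X_pow, degree_le_iff_coeff_zero]
    intro m hm
    have hnm : n ≤ m := by rw [Nat.cast_lt] at hm; omega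
    rcases hnm.eq_or_lt with rfl | hlt
    · simp [Q]
    · simp [Q, coeff_eq_zero_of_natDegree_lt (hP.trans_lt hlt), coeff_X_pow, hlt.ne']
  simpa [Q] using isBigO_atTop_of_degree_le Q _ hQ

theorem coeff_trace_eq_trace_coeff_matPolyEquiv {R n : Type*} [CommSemiring R] [Fintype n]
    [DecidableEq n] (M : Matrix n n R[X]) (k : ℕ) :
    M.trace.coeff k = ((matPolyEquiv M).coeff k).trace := by
  simp [Matrix.trace]

theorem natDegree_trace_le_natDegree_matPolyEquiv {R n : Type*} [CommSemiring R] [Fintype n]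
    [DecidableEq n] (M : Matrix n n R[X]) : M.trace.natDegree ≤ (matPolyEquiv M).natDegree :=
  natDegree_le_iff_coeff_eq_zero.2 fun k hk => by
    rw [coeff_trace_eq_trace_coeff_matPolyEquiv, coeff_eq_zero_of_natDegree_lt hk, trace_zero]

noncomputable def eggMatPoly (ε : ℕ → ℝ) (k : ℕ) : Matrix (Fin 2) (Fin 2) ℝ[X] :=
  !![1 + C (ε (2 * k + 2) * ε (2 * k - 1)) * X ^ 2, -(C (ε (2 * k + 2)) * X);
     -(C (ε (2 * k - 1)) * X), 1]

noncomputable def eggProdPoly (ε : ℕ → ℝ) (p : ℕ) : Matrix (Fin 2) (Fin 2) ℝ[X] :=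
  ((List.range p).map fun t => eggMatPoly ε (p - t)).prod

section Eggbeater

variable (ε : ℕ → ℝ)

theorem det_eggMat (lam : ℝ) (k : ℕ) : (eggMat ε lam k).det = 1 := by
  rw [eggMat, det_fin_two_of]
  ring

theorem det_eggProdFull (p : ℕ) (lam : ℝ) : (eggProdFull ε p lam).det = 1 := by
  rw [eggProdFull, ← coe_detMonoidHom, map_list_prod, List.map_map]
  exact List.prod_eq_one fun A hA => by
    obtain ⟨t, -, rfl⟩ := List.mem_map.1 hA
    exact det_eggMat ε lam _

theorem eggMatPoly_map_eval (lam : ℝ) (k : ℕ) :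
    (eggMatPoly ε k).map (eval lam) = eggMat ε lam k := by
  ext i j
  fin_cases i <;> fin_cases j <;> simp [eggMatPoly, eggMat]

theorem eggProdPoly_map_eval (p : ℕ) (lam : ℝ) :
    (eggProdPoly ε p).map (eval lam) = eggProdFull ε p lam := by
  simp only [eggProdPoly, eggProdFull, ← eggMatPoly_map_eval, ← coe_evalRingHom,
    ← RingHom.mapMatrix_apply, map_list_prod, List.map_map, Function.comp_def]

theorem natDegree_matPolyEquiv_eggMatPoly_le (k : ℕ) :
    (matPolyEquiv (eggMatPoly ε k)).natDegree ≤ 2 := by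
  refine natDegree_le_iff_coeff_eq_zero.2 fun n hn => ?_
  have h1 : n ≠ 1 := by omega
  have h2 : n ≠ 2 := by omega
  have h0 : n ≠ 0 := by omega
  ext i j
  fin_cases i <;> fin_cases j <;>
    simp [eggMatPoly, coeff_X, coeff_one, coeff_X_pow, mul_assoc, h0, h1.symm, h2]

theorem coeff_matPolyEquiv_eggMatPoly_two (k : ℕ) :
    (matPolyEquiv (eggMatPoly ε k)).coeff 2 = diagonal ![ε (2 * k + 2) * ε (2 * k - 1), 0] := by
  ext i j
  fin_cases i <;> fin_cases j <;> simp [eggMatPoly, coeff_one, mul_assoc]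

theorem matPolyEquiv_eggProdPoly (p : ℕ) : matPolyEquiv (eggProdPoly ε p) =
    ((List.range p).map fun t => matPolyEquiv (eggMatPoly ε (p - t))).prod := by
  rw [eggProdPoly, map_list_prod, List.map_map, Function.comp_def]

theorem natDegree_trace_eggProdPoly_le (p : ℕ) : (eggProdPoly ε p).trace.natDegree ≤ 2 * p := by
  refine (natDegree_trace_le_natDegree_matPolyEquiv _).trans ?_
  rw [matPolyEquiv_eggProdPoly]
  refine (natDegree_list_prod_le_of_forall_le _ fun P hP => ?_).trans_eq
    (by rw [List.length_map, List.length_range, mul_comm])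
  obtain ⟨t, -, rfl⟩ := List.mem_map.1 hP
  exact natDegree_matPolyEquiv_eggMatPoly_le ε _

theorem coeff_trace_eggProdPoly {p : ℕ} (hp : 0 < p) :
    (eggProdPoly ε p).trace.coeff (2 * p) =
      ∏ t ∈ Finset.range p, ε (2 * (p - t) + 2) * ε (2 * (p - t) - 1) := by
  have hlead := coeff_list_prod_of_natDegree_le
    ((List.range p).map fun t => matPolyEquiv (eggMatPoly ε (p - t))) 2 fun P hP => by
      obtain ⟨t, -, rfl⟩ := List.mem_map.1 hP
      exact natDegree_matPolyEquiv_eggMatPoly_le ε _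
  rw [List.length_map, List.length_range, List.map_map] at hlead
  simp only [Function.comp_def, coeff_matPolyEquiv_eggMatPoly_two] at hlead
  rw [coeff_trace_eq_trace_coeff_matPolyEquiv, matPolyEquiv_eggProdPoly, mul_comm, hlead,
    list_prod_map_diagonal]
  simp [Fin.sum_univ_two, List.prod_map_range, hp.ne']

theorem exists_polynomial_eval_eq_det_eggProdFull_sub_one {p : ℕ} (hp : 0 < p)
    (hper : ε (2 * p + 2) = ε 2) :
    ∃ D : ℝ[X], D.natDegree ≤ 2 * p ∧ D.coeff (2 * p) = -∏ k ∈ Finset.Icc 1 (2 * p), ε k ∧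
      ∀ lam, (eggProdFull ε p lam - 1).det = D.eval lam := by
  refine ⟨C 2 - (eggProdPoly ε p).trace, ?_, ?_, fun lam => ?_⟩
  · exact (natDegree_sub_le_of_le (natDegree_C 2).le (natDegree_trace_eggProdPoly_le ε p)).trans
      (max_le (Nat.zero_le _) le_rfl)
  · rw [coeff_sub, coeff_C, if_neg (by omega), coeff_trace_eggProdPoly ε hp,
      Finset.prod_range_sub_pairs_eq_prod_Icc hp hper, zero_sub]
  · rw [det_sub_one_eq_two_sub_trace_of_det_eq_one (det_eggProdFull ε p lam),
      ← eggProdPoly_map_eval]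
    simp [trace_fin_two]

end Eggbeater

/-- For `Ā_λ = A_{λ,p} ⋯ A_{λ,1}` and `ε̄ = ∏_{k=1}^{2p} ε_k`, one has
`det (Ā_λ - I) = 2 - trace Ā_λ = -ε̄ λ^{2p} + O(λ^{2p-1})`; in particular, for all
sufficiently large `λ`, `det (Ā_λ - I) ≠ 0`, so `(Ā_λ - I) x = v` has a unique
solution `x` for every `v ∈ ℝ²`. -/
theorem eggbeater_det_asymptotics_and_unique_solution
    (p : ℕ) (hp : 0 < p) (ε : ℕ → ℝ) (hε : ∀ k, ε k = 1 ∨ ε k = -1)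
    (hper : ∀ k, ε (k + 2 * p) = ε k) :
    (∀ lam : ℝ, (eggProdFull ε p lam - 1).det = 2 - (eggProdFull ε p lam).trace) ∧
    ((fun lam : ℝ => (eggProdFull ε p lam - 1).det +
        (∏ k ∈ Finset.Icc 1 (2 * p), ε k) * lam ^ (2 * p)) =O[atTop]
      fun lam : ℝ => lam ^ (2 * p - 1)) ∧
    (∃ Λ : ℝ, ∀ lam : ℝ, Λ ≤ lam →
      (eggProdFull ε p lam - 1).det ≠ 0 ∧
      ∀ v : Fin 2 → ℝ, ∃! x : Fin 2 → ℝ, (eggProdFull ε p lam - 1).mulVec x = v) := by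
  obtain ⟨D, hD_deg, hD_lead, hD⟩ :=
    exists_polynomial_eval_eq_det_eggProdFull_sub_one ε hp (by rw [add_comm]; exact hper 2)
  have hsign : ∏ k ∈ Finset.Icc 1 (2 * p), ε k ≠ 0 :=
    Finset.prod_ne_zero_iff.2 fun k _ => by rcases hε k with h | h <;> simp [h]
  have hD_ne : D ≠ 0 := fun h => hsign (by simpa [h] using hD_lead)
  refine ⟨fun lam => det_sub_one_eq_two_sub_trace_of_det_eq_one (det_eggProdFull ε p lam), ?_, ?_⟩
  · convert isBigO_eval_sub_coeff_mul_pow hD_deg using 2 with lam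
    rw [hD, hD_lead]
    ring
  · obtain ⟨Λ, hΛ⟩ := eventually_atTop.1 (eventually_atTop_not_isRoot D hD_ne)
    refine ⟨Λ, fun lam hlam => ?_⟩
    have hdet : (eggProdFull ε p lam - 1).det ≠ 0 := (hD lam).trans_ne (hΛ lam hlam)
    exact ⟨hdet, existsUnique_mulVec_eq hdet⟩
end
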